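/- arXiv:2112.03432 — 4 statements merged into one kernel-verified Lean document; each statement's English description precedes it below -/
import Mathlib

section
/- Let Lambda be a symmetric positive definite d x d matrix with orthonormal eigenvectors u_1,...,u_d. Let cat: R^d -> R and theta_star in R^d satisfy |cat(u_i) - <u_i, theta_star>| <= C1*||u_i||_{Lambda^{-1}} + C2/T for each i = 1,...,d (C1, C2 >= 0, T > 0). Define theta_hat = sum_{i=1}^d cat(u_i) * u_i. Then for every v in R^d, |<v, theta_hat> - <v, theta_star>| <= sqrt(d)*C1*||v||_{Lambda^{-1}} + sqrt(d)*||v||_2*C2/T. -/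
open Matrix

/-- The (semi)norm ‖v‖_M = √(vᵀ M v) induced by a matrix M. -/
noncomputable def mnorm {d : ℕ} (M : Matrix (Fin d) (Fin d) ℝ) (v : Fin d → ℝ) : ℝ :=
  Real.sqrt (v ⬝ᵥ (M *ᵥ v))

/-!
Expand `v = ∑ aᵢ uᵢ` with `aᵢ = v ⬝ᵥ uᵢ`. The error `v ⬝ᵥ θ̂ - v ⬝ᵥ θ*` is then `∑ aᵢ eᵢ`, where `eᵢ`
is the error of `cat` at `uᵢ`, and `‖v‖²_{Λ⁻¹} = ∑ aᵢ² ‖uᵢ‖²_{Λ⁻¹}` because the `uᵢ` diagonalize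
`Λ⁻¹`. The triangle inequality followed by Cauchy–Schwarz for `∑ |aᵢ| ‖uᵢ‖_{Λ⁻¹}` and for
`∑ |aᵢ|` gives the two terms of the bound.
-/

open Finset

theorem sum_abs_le_sqrt_card_mul_sqrt_sum_sq {ι : Type*} [Fintype ι] (x : ι → ℝ) :
    ∑ i, |x i| ≤ √(Fintype.card ι) * √(∑ i, x i ^ 2) := by
  simpa [sq_abs] using Real.sum_mul_le_sqrt_mul_sqrt univ (fun _ => (1 : ℝ)) (fun i => |x i|)

theorem abs_sum_mul_le_of_abs_le {ι : Type*} [Fintype ι] (a e s : ι → ℝ) {C K : ℝ}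
    (hC : 0 ≤ C) (hK : 0 ≤ K) (he : ∀ i, |e i| ≤ C * s i + K) :
    |∑ i, a i * e i| ≤ √(Fintype.card ι) * C * √(∑ i, (a i * s i) ^ 2)
      + √(Fintype.card ι) * √(∑ i, a i ^ 2) * K := by
  have hweighted : ∑ i, |a i| * s i ≤ √(Fintype.card ι) * √(∑ i, (a i * s i) ^ 2) :=
    calc ∑ i, |a i| * s i ≤ ∑ i, |a i * s i| :=
          sum_le_sum fun i _ => by
            rw [abs_mul]; exact mul_le_mul_of_nonneg_left (le_abs_self _) (abs_nonneg _)
      _ ≤ _ := sum_abs_le_sqrt_card_mul_sqrt_sum_sq _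
  calc |∑ i, a i * e i| ≤ ∑ i, |a i| * (C * s i + K) :=
        (abs_sum_le_sum_abs _ _).trans <| sum_le_sum fun i _ =>
          abs_mul (a i) (e i) ▸ mul_le_mul_of_nonneg_left (he i) (abs_nonneg _)
    _ = C * ∑ i, |a i| * s i + (∑ i, |a i|) * K := by
        simp only [mul_add, sum_add_distrib, mul_sum, sum_mul]
        congr 1
        exact sum_congr rfl fun i _ => by ring
    _ ≤ C * (√(Fintype.card ι) * √(∑ i, (a i * s i) ^ 2))
          + √(Fintype.card ι) * √(∑ i, a i ^ 2) * K := by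
        gcongr
        exact sum_abs_le_sqrt_card_mul_sqrt_sum_sq a
    _ = _ := by ring

section Orthonormal

variable {n : Type*} [Fintype n] [DecidableEq n] {u : n → n → ℝ}

theorem sum_dotProduct_smul_of_orthonormal
    (horth : ∀ i j, u i ⬝ᵥ u j = if i = j then 1 else 0) (v : n → ℝ) :
    ∑ i, (v ⬝ᵥ u i) • u i = v := by
  have hU : (of u)ᵀ * of u = 1 := mul_eq_one_comm.mp <| by
    ext i j
    simpa [mul_apply, one_apply, dotProduct] using horth i j
  calc ∑ i, (v ⬝ᵥ u i) • u i = (of u)ᵀ *ᵥ (of u *ᵥ v) := by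
        simp only [mulVec_transpose, vecMul_eq_sum, mulVec, of_apply, dotProduct_comm]
        rfl
    _ = v := by rw [mulVec_mulVec, hU, one_mulVec]

theorem dotProduct_eq_sum_of_orthonormal
    (horth : ∀ i j, u i ⬝ᵥ u j = if i = j then 1 else 0) (v w : n → ℝ) :
    v ⬝ᵥ w = ∑ i, (v ⬝ᵥ u i) * (u i ⬝ᵥ w) := by
  conv_lhs => rw [← sum_dotProduct_smul_of_orthonormal horth v]
  simp only [sum_dotProduct, smul_dotProduct, smul_eq_mul]

theorem dotProduct_mulVec_eq_sum_of_orthonormal {M : Matrix n n ℝ} {c : n → ℝ}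
    (horth : ∀ i j, u i ⬝ᵥ u j = if i = j then 1 else 0) (hM : ∀ i, M *ᵥ u i = c i • u i)
    (v : n → ℝ) :
    v ⬝ᵥ (M *ᵥ v) = ∑ i, c i * (v ⬝ᵥ u i) ^ 2 := by
  conv_lhs => arg 2; rw [← sum_dotProduct_smul_of_orthonormal horth v]
  simp only [mulVec_sum, mulVec_smul, hM, dotProduct_sum, dotProduct_smul, smul_eq_mul]
  exact sum_congr rfl fun i _ => by ring

end Orthonormal

theorem Matrix.PosDef.pos_of_mulVec_eq_smul {n : Type*} [Fintype n] {A : Matrix n n ℝ}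
    (hA : A.PosDef) {x : n → ℝ} {c : ℝ} (hx : x ≠ 0) (hAx : A *ᵥ x = c • x) : 0 < c := by
  have hpos := hA.dotProduct_mulVec_pos hx
  rw [hAx, dotProduct_smul, smul_eq_mul, star_trivial] at hpos
  exact pos_of_mul_pos_left hpos (dotProduct_self_star_nonneg x)

theorem Matrix.inv_mulVec_eq_inv_smul {n : Type*} [Fintype n] [DecidableEq n] {A : Matrix n n ℝ}
    (hA : IsUnit A.det) {x : n → ℝ} {c : ℝ} (hc : c ≠ 0) (hAx : A *ᵥ x = c • x) :
    A⁻¹ *ᵥ x = c⁻¹ • x := by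
  calc A⁻¹ *ᵥ x = c⁻¹ • A⁻¹ *ᵥ (A *ᵥ x) := by
        rw [hAx, mulVec_smul, smul_smul, inv_mul_cancel₀ hc, one_smul]
    _ = c⁻¹ • x := by rw [mulVec_mulVec, nonsing_inv_mul A hA, one_mulVec]

/-- eigenbasis linear approximation to the Catoni estimates. -/
theorem stmt12 (d : ℕ) (Λ : Matrix (Fin d) (Fin d) ℝ) (hΛ : Λ.PosDef)
    (u : Fin d → Fin d → ℝ) (μev : Fin d → ℝ)
    (horth : ∀ i j, u i ⬝ᵥ u j = if i = j then (1 : ℝ) else 0)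
    (heig : ∀ i, Λ *ᵥ u i = μev i • u i)
    (cat : (Fin d → ℝ) → ℝ) (θs : Fin d → ℝ) (C1 C2 T : ℝ)
    (hC1 : 0 ≤ C1) (hC2 : 0 ≤ C2) (hT : 0 < T)
    (hcat : ∀ i, |cat (u i) - u i ⬝ᵥ θs| ≤ C1 * mnorm Λ⁻¹ (u i) + C2 / T) :
    ∀ v : Fin d → ℝ,
      |v ⬝ᵥ (∑ i, cat (u i) • u i) - v ⬝ᵥ θs|
        ≤ Real.sqrt d * C1 * mnorm Λ⁻¹ v
          + Real.sqrt d * Real.sqrt (v ⬝ᵥ v) * C2 / T := by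
  intro v
  have hμ : ∀ i, 0 < μev i := fun i => hΛ.pos_of_mulVec_eq_smul
    (fun h => by simpa [h] using horth i i) (heig i)
  have hinv : ∀ i, Λ⁻¹ *ᵥ u i = (μev i)⁻¹ • u i := fun i =>
    inv_mulVec_eq_inv_smul hΛ.det_pos.ne'.isUnit (hμ i).ne' (heig i)
  have hmnorm_u : ∀ i, mnorm Λ⁻¹ (u i) = √(μev i)⁻¹ := fun i => by
    simp [mnorm, hinv i, dotProduct_smul, horth i i]
  have hmnorm_v : mnorm Λ⁻¹ v = √(∑ i, ((v ⬝ᵥ u i) * √(μev i)⁻¹) ^ 2) := by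
    rw [mnorm, dotProduct_mulVec_eq_sum_of_orthonormal horth hinv]
    exact congrArg _ <| sum_congr rfl fun i _ => by
      rw [mul_pow, Real.sq_sqrt (inv_nonneg.2 (hμ i).le), mul_comm]
  have hvv : v ⬝ᵥ v = ∑ i, (v ⬝ᵥ u i) ^ 2 := by
    simp only [dotProduct_eq_sum_of_orthonormal horth v v, dotProduct_comm (u _) v, sq]
  have hlhs : v ⬝ᵥ (∑ i, cat (u i) • u i) - v ⬝ᵥ θs
      = ∑ i, (v ⬝ᵥ u i) * (cat (u i) - u i ⬝ᵥ θs) := by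
    simp only [dotProduct_eq_sum_of_orthonormal horth v θs, dotProduct_sum, dotProduct_smul,
      smul_eq_mul, mul_sub, sum_sub_distrib, mul_comm]
  rw [hlhs, hmnorm_v, hvv, mul_div_assoc]
  simpa only [Fintype.card_fin] using abs_sum_mul_le_of_abs_le (fun i => v ⬝ᵥ u i) _ _ hC1
    (div_nonneg hC2 hT.le) (fun i => hmnorm_u i ▸ hcat i)
end

section
/- Let X_1,...,X_T and X'_1,...,X'_T be reals with |X_t|, |X'_t| <= gamma, let alpha, alpha' > 0, and let z*, z*' be the (unique) roots of f(z) = sum_t psi(alpha*(X_t - z)) and f'(z) = sum_t psi(alpha'*(X'_t - z)) respectively, where psi is the Catoni influence function. Define eps := (1/T)*sum_t alpha*|X_t - X'_t| + 3*gamma*|alpha - alpha'|. If eps <= (1/18)*min{1, alpha^2*gamma^2}, then |z* - z*'| <= ((1 + 2*alpha*gamma)/alpha)*eps + sqrt(2*eps/alpha^2). -/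
/-!
The Catoni function ψ is odd, so everything about it is read off from y ↦ log (1 + y + y²) on
y ≥ 0: ψ is strictly increasing, 7/6-Lipschitz, and has slope at least 2 / (2 + R) on [-R, R].
Put d = (1 + 2αγ) ε + √(2ε) and w = z + d / α. Termwise, ψ(α'(X'ₜ - w)) exceeds ψ(α(Xₜ - z) - d)
by at most (7/6) εₜ, where εₜ = α |Xₜ - X'ₜ| + 3γ |α - α'|, and ψ(α(Xₜ - z) - d) lies at least
2d / (2 + 2αγ + d) below ψ(α(Xₜ - z)). For ε ≤ 1/18 we have √(2ε) ≥ 6ε, which makes the slope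
gain beat the Lipschitz loss; hence the second objective is ≤ 0 at w, and z' ≤ w because that
objective is decreasing. The bound ε ≤ (αγ)²/18 keeps d ≤ αγ, so that w stays within 2γ of the
origin. Negating all data gives the other direction.
-/

/-- The Catoni influence function. -/
noncomputable def psiCatoni (y : ℝ) : ℝ :=
  if 0 ≤ y then Real.log (1 + y + y ^ 2) else - Real.log (1 - y + y ^ 2)

open Set Real

theorem Function.Odd.monotoneOn_Icc_neg_self {α β : Type*} [AddCommGroup α] [LinearOrder α]
    [IsOrderedAddMonoid α] [AddCommGroup β] [PartialOrder β] [IsOrderedAddMonoid β]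
    {f : α → β} (hf : f.Odd) {R : α} (h : MonotoneOn f (Icc 0 R)) :
    MonotoneOn f (Icc (-R) R) := by
  rcases lt_or_ge R 0 with hR | hR
  · intro x hx
    exact absurd (neg_le_self_iff.mp (hx.1.trans hx.2)) hR.not_ge
  have hneg : MonotoneOn f (Icc (-R) 0) := by
    intro x hx y hy hxy
    have := h ⟨neg_nonneg.mpr hy.2, neg_le.mpr hy.1⟩ ⟨neg_nonneg.mpr hx.2, neg_le.mpr hx.1⟩
      (neg_le_neg hxy)
    rwa [hf.eq, hf.eq, neg_le_neg_iff] at this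
  rw [← Icc_union_Icc_eq_Icc (neg_nonpos.mpr hR) hR]
  exact hneg.union_right h (isGreatest_Icc (neg_nonpos.mpr hR)) (isLeast_Icc hR)

theorem psiCatoni_of_nonneg {y : ℝ} (hy : 0 ≤ y) : psiCatoni y = log (1 + y + y ^ 2) :=
  if_pos hy

theorem psiCatoni_odd : Function.Odd psiCatoni := by
  intro y
  unfold psiCatoni
  rcases lt_trichotomy y 0 with hy | rfl | hy
  · rw [if_pos (by linarith), if_neg hy.not_ge]
    ring_nf
  · simp
  · rw [if_neg (by linarith), if_pos hy.le]
    ring_nf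

theorem one_add_add_sq_pos (x : ℝ) : 0 < 1 + x + x ^ 2 := by
  nlinarith [sq_nonneg (2 * x + 1)]

theorem hasDerivAt_log_one_add_add_sq (x : ℝ) :
    HasDerivAt (fun y => log (1 + y + y ^ 2)) ((1 + 2 * x) / (1 + x + x ^ 2)) x := by
  have hpoly : HasDerivAt (fun y => 1 + y + y ^ 2) (1 + 2 * x) x :=
    (((hasDerivAt_id x).const_add 1).add (hasDerivAt_pow 2 x)).congr_deriv (by ring)
  exact hpoly.log (one_add_add_sq_pos x).ne'

theorem monotone_mul_sub_log_one_add_add_sq :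
    Monotone fun x => 7 / 6 * x - log (1 + x + x ^ 2) := by
  have hd (x : ℝ) : HasDerivAt (fun x => 7 / 6 * x - log (1 + x + x ^ 2))
      (7 / 6 - (1 + 2 * x) / (1 + x + x ^ 2)) x :=
    (((hasDerivAt_id x).const_mul _).sub (hasDerivAt_log_one_add_add_sq x)).congr_deriv
      (by ring)
  refine monotone_of_deriv_nonneg (fun x => (hd x).differentiableAt) fun x => ?_
  rw [(hd x).deriv, sub_nonneg, div_le_iff₀ (one_add_add_sq_pos x)]
  nlinarith [sq_nonneg (14 * x - 5)]

theorem monotoneOn_log_one_add_add_sq_sub_mul (R : ℝ) :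
    MonotoneOn (fun x => log (1 + x + x ^ 2) - 2 / (2 + R) * x) (Icc 0 R) := by
  have hd (x : ℝ) : HasDerivAt (fun x => log (1 + x + x ^ 2) - 2 / (2 + R) * x)
      ((1 + 2 * x) / (1 + x + x ^ 2) - 2 / (2 + R)) x :=
    ((hasDerivAt_log_one_add_add_sq x).sub ((hasDerivAt_id x).const_mul _)).congr_deriv
      (by ring)
  refine monotoneOn_of_deriv_nonneg (convex_Icc 0 R)
    (HasDerivAt.continuousOn fun x _ => hd x)
    (fun x _ => (hd x).differentiableAt.differentiableWithinAt) fun x hx => ?_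
  rw [interior_Icc] at hx
  rw [(hd x).deriv, sub_nonneg,
    div_le_div_iff₀ (by linarith [hx.1, hx.2]) (one_add_add_sq_pos x)]
  nlinarith [hx.1, hx.2, mul_nonneg hx.1.le (sub_nonneg.mpr hx.2.le)]

theorem psiCatoni_sub_le {a b : ℝ} (hab : a ≤ b) :
    psiCatoni b - psiCatoni a ≤ 7 / 6 * (b - a) := by
  set R := |a| + |b|
  have hodd : Function.Odd fun x => 7 / 6 * x - psiCatoni x := fun x => by
    simp only [psiCatoni_odd.eq]; ring
  have hpos : MonotoneOn (fun x => 7 / 6 * x - psiCatoni x) (Icc 0 R) :=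
    monotone_mul_sub_log_one_add_add_sq.monotoneOn _ |>.congr fun x hx => by
      simp only [psiCatoni_of_nonneg hx.1]
  have := hodd.monotoneOn_Icc_neg_self hpos
    ⟨by linarith [neg_abs_le a, abs_nonneg b], by linarith [le_abs_self a, abs_nonneg b]⟩
    ⟨by linarith [neg_abs_le b, abs_nonneg a], by linarith [le_abs_self b, abs_nonneg a]⟩ hab
  simp only at this
  linarith

theorem mul_sub_le_psiCatoni_sub {R a b : ℝ} (hRa : -R ≤ a) (hab : a ≤ b) (hbR : b ≤ R) :
    2 / (2 + R) * (b - a) ≤ psiCatoni b - psiCatoni a := by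
  have hodd : Function.Odd fun x => psiCatoni x - 2 / (2 + R) * x := fun x => by
    simp only [psiCatoni_odd.eq]; ring
  have hpos : MonotoneOn (fun x => psiCatoni x - 2 / (2 + R) * x) (Icc 0 R) :=
    (monotoneOn_log_one_add_add_sq_sub_mul R).congr fun x hx => by
      simp only [psiCatoni_of_nonneg hx.1]
  have := hodd.monotoneOn_Icc_neg_self hpos ⟨hRa, hab.trans hbR⟩ ⟨hRa.trans hab, hbR⟩ hab
  simp only at this
  linarith

theorem psiCatoni_strictMono : StrictMono psiCatoni := by
  intro a b hab
  have := mul_sub_le_psiCatoni_sub (R := |a| + |b|)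
    (by linarith [neg_abs_le a, abs_nonneg b]) hab.le (by linarith [le_abs_self b, abs_nonneg a])
  have : 0 < 2 / (2 + (|a| + |b|)) * (b - a) := by
    apply mul_pos (by positivity) (by linarith)
  linarith

theorem psiCatoni_add_sub_le (x e : ℝ) : psiCatoni (x + e) - psiCatoni x ≤ 7 / 6 * |e| := by
  rcases le_total 0 e with he | he
  · simpa [abs_of_nonneg he] using psiCatoni_sub_le (le_add_of_nonneg_right he)
  · have := psiCatoni_strictMono.monotone (add_le_of_nonpos_right (a := x) he)
    have := abs_nonneg e
    linarith

theorem mul_sub_abs_le_psiCatoni_sub {A u d : ℝ} (hu : |u| ≤ A) (hd : 0 ≤ d) (e : ℝ) :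
    2 / (2 + A + d) * d - 7 / 6 * |e| ≤ psiCatoni u - psiCatoni (u - d + e) := by
  obtain ⟨hu₁, hu₂⟩ := abs_le.mp hu
  have hslope := mul_sub_le_psiCatoni_sub (R := A + d) (a := u - d) (b := u)
    (by linarith) (by linarith) (by linarith)
  have hlip := psiCatoni_add_sub_le (u - d) e
  rw [sub_sub_cancel, ← add_assoc] at hslope
  linarith

theorem strictAnti_sum_psiCatoni {T : ℕ} (hT : 0 < T) {β : ℝ} (hβ : 0 < β) (Y : ℕ → ℝ) :
    StrictAnti fun z => ∑ t ∈ Finset.range T, psiCatoni (β * (Y t - z)) := fun z w hzw =>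
  Finset.sum_lt_sum_of_nonempty (Finset.nonempty_range_iff.mpr hT.ne') fun t _ =>
    psiCatoni_strictMono (by nlinarith)

theorem abs_le_of_sum_psiCatoni_eq_zero {T : ℕ} (hT : 0 < T) {β γ z : ℝ} (hβ : 0 < β)
    {Y : ℕ → ℝ} (hY : ∀ t ∈ Finset.range T, |Y t| ≤ γ)
    (hz : ∑ t ∈ Finset.range T, psiCatoni (β * (Y t - z)) = 0) : |z| ≤ γ := by
  have hf := strictAnti_sum_psiCatoni hT hβ Y
  have hψ0 : psiCatoni 0 = 0 := by simp [psiCatoni]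
  refine abs_le.mpr ⟨hf.le_iff_ge.mp ?_, hf.le_iff_ge.mp ?_⟩
  · refine hz.trans_le (Finset.sum_nonneg fun t ht => ?_)
    rw [← hψ0]
    exact psiCatoni_strictMono.monotone (by nlinarith [(abs_le.mp (hY t ht)).1])
  · refine (Finset.sum_nonpos fun t ht => ?_).trans hz.ge
    rw [← hψ0]
    exact psiCatoni_strictMono.monotone (by nlinarith [(abs_le.mp (hY t ht)).2])

noncomputable def catoniRadius (A ε : ℝ) : ℝ := (1 + 2 * A) * ε + √(2 * ε)

section catoniRadius

variable {A ε : ℝ}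

theorem catoniRadius_nonneg (hA : 0 ≤ A) (hε : 0 ≤ ε) : 0 ≤ catoniRadius A ε := by
  unfold catoniRadius; positivity

theorem catoniRadius_le (hA : 0 ≤ A) (hε₁ : ε ≤ 1 / 18) (hεA : ε ≤ A ^ 2 / 18) :
    catoniRadius A ε ≤ A := by
  have hεA' : ε ≤ A / 18 := by
    rcases le_total A 1 with h | h <;> nlinarith
  have hsqrt : √(2 * ε) ≤ A / 3 := Real.sqrt_le_iff.mpr ⟨by positivity, by nlinarith⟩
  unfold catoniRadius
  nlinarith

theorem mul_le_catoniRadius_slope (hA : 0 ≤ A) (hε : 0 ≤ ε) (hε₁ : ε ≤ 1 / 18) :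
    7 / 6 * ε ≤ 2 / (2 + 2 * A + catoniRadius A ε) * catoniRadius A ε := by
  have hsqrt : 6 * ε ≤ √(2 * ε) :=
    (Real.le_sqrt (by positivity) (by positivity)).mpr (by nlinarith)
  have hd := catoniRadius_nonneg hA hε
  rw [div_mul_eq_mul_div (2 : ℝ), le_div_iff₀ (by positivity)]
  unfold catoniRadius at *
  nlinarith [mul_le_mul_of_nonneg_left hε₁ (mul_nonneg hA hε), mul_le_mul_of_nonneg_left hε₁ hε,
    mul_le_mul_of_nonneg_left hε₁ (Real.sqrt_nonneg (2 * ε))]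

end catoniRadius

theorem abs_mul_sub_sub_mul_sub_le {a : ℝ} (ha : 0 ≤ a) (a' x x' w : ℝ) :
    |a' * (x' - w) - a * (x - w)| ≤ a * |x - x'| + |a - a'| * |x' - w| :=
  calc |a' * (x' - w) - a * (x - w)| = |a * (x' - x) + (a' - a) * (x' - w)| := by ring_nf
    _ ≤ |a * (x' - x)| + |(a' - a) * (x' - w)| := abs_add_le _ _
    _ = a * |x - x'| + |a - a'| * |x' - w| := by
      rw [abs_mul, abs_mul, abs_of_nonneg ha, abs_sub_comm x', abs_sub_comm a']

theorem sum_psiCatoni_shift_nonpos {T : ℕ} (hT : 0 < T) {X X' : ℕ → ℝ} {γ α α' z ε : ℝ}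
    (hα : 0 < α) (hX : ∀ t ∈ Finset.range T, |X t| ≤ γ)
    (hX' : ∀ t ∈ Finset.range T, |X' t| ≤ γ)
    (hz : ∑ t ∈ Finset.range T, psiCatoni (α * (X t - z)) = 0)
    (hsum : ∑ t ∈ Finset.range T, (α * |X t - X' t| + 3 * γ * |α - α'|) ≤ T * ε)
    (hε : 0 ≤ ε) (hε₁ : ε ≤ 1 / 18) (hεA : ε ≤ (α * γ) ^ 2 / 18) :
    ∑ t ∈ Finset.range T, psiCatoni (α' * (X' t - (z + catoniRadius (α * γ) ε / α))) ≤ 0 := by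
  have hγ : 0 ≤ γ := (abs_nonneg _).trans (hX 0 (Finset.mem_range.mpr hT))
  have hzγ := abs_le.mp (abs_le_of_sum_psiCatoni_eq_zero hT hα hX hz)
  have hA : 0 ≤ α * γ := by positivity
  set d := catoniRadius (α * γ) ε
  set w := z + d / α with hw_def
  have hd : 0 ≤ d := catoniRadius_nonneg hA hε
  have hdγ : d / α ≤ γ := (div_le_iff₀ hα).mpr (by linarith [catoniRadius_le hA hε₁ hεA])
  have hterm : ∀ t ∈ Finset.range T,
      2 / (2 + 2 * (α * γ) + d) * d - 7 / 6 * (α * |X t - X' t| + 3 * γ * |α - α'|)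
        ≤ psiCatoni (α * (X t - z)) - psiCatoni (α' * (X' t - w)) := by
    intro t ht
    obtain ⟨hXt₁, hXt₂⟩ := abs_le.mp (hX t ht)
    obtain ⟨hX't₁, hX't₂⟩ := abs_le.mp (hX' t ht)
    have hu : |α * (X t - z)| ≤ 2 * (α * γ) := by
      rw [abs_mul, abs_of_pos hα]
      nlinarith [abs_le.mpr (⟨by linarith, by linarith⟩ : -(2 * γ) ≤ X t - z ∧ X t - z ≤ 2 * γ)]
    have hw : |X' t - w| ≤ 3 * γ := by
      have := div_nonneg hd hα.le
      exact abs_le.mpr ⟨by linarith, by linarith⟩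
    have he : |α' * (X' t - w) - α * (X t - w)| ≤ α * |X t - X' t| + 3 * γ * |α - α'| := by
      linarith [abs_mul_sub_sub_mul_sub_le hα.le α' (X t) (X' t) w,
        mul_le_mul_of_nonneg_left hw (abs_nonneg (α - α'))]
    have hshift : α * (X t - z) - d + (α' * (X' t - w) - α * (X t - w)) = α' * (X' t - w) := by
      simp only [w]; field_simp; ring
    have := mul_sub_abs_le_psiCatoni_sub hu hd (α' * (X' t - w) - α * (X t - w))
    rw [hshift] at this
    linarith
  have hmargin := mul_le_mul_of_nonneg_left (mul_le_catoniRadius_slope hA hε hε₁)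
    (Nat.cast_nonneg T : (0 : ℝ) ≤ T)
  have := Finset.sum_le_sum hterm
  rw [Finset.sum_sub_distrib, Finset.sum_sub_distrib, hz, Finset.sum_const, Finset.card_range,
    nsmul_eq_mul, ← Finset.mul_sum] at this
  linarith

theorem sub_le_catoniRadius_div {T : ℕ} (hT : 0 < T) {X X' : ℕ → ℝ} {γ α α' z z' ε : ℝ}
    (hα : 0 < α) (hα' : 0 < α') (hX : ∀ t ∈ Finset.range T, |X t| ≤ γ)
    (hX' : ∀ t ∈ Finset.range T, |X' t| ≤ γ)
    (hz : ∑ t ∈ Finset.range T, psiCatoni (α * (X t - z)) = 0)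
    (hz' : ∑ t ∈ Finset.range T, psiCatoni (α' * (X' t - z')) = 0)
    (hsum : ∑ t ∈ Finset.range T, (α * |X t - X' t| + 3 * γ * |α - α'|) ≤ T * ε)
    (hε : 0 ≤ ε) (hε₁ : ε ≤ 1 / 18) (hεA : ε ≤ (α * γ) ^ 2 / 18) :
    z' - z ≤ catoniRadius (α * γ) ε / α := by
  have := (strictAnti_sum_psiCatoni hT hα' X').le_iff_ge.mp
    ((sum_psiCatoni_shift_nonpos hT hα hX hX' hz hsum hε hε₁ hεA).trans hz'.ge)
  linarith

theorem sum_psiCatoni_neg_sub_neg (s : Finset ℕ) (β z : ℝ) (Y : ℕ → ℝ) :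
    ∑ t ∈ s, psiCatoni (β * ((-Y) t - -z)) = -∑ t ∈ s, psiCatoni (β * (Y t - z)) := by
  rw [← Finset.sum_neg_distrib]
  refine Finset.sum_congr rfl fun t _ => ?_
  rw [← psiCatoni_odd.eq, Pi.neg_apply]
  ring_nf

theorem abs_sub_le_catoniRadius_div {T : ℕ} (hT : 0 < T) {X X' : ℕ → ℝ} {γ α α' z z' ε : ℝ}
    (hα : 0 < α) (hα' : 0 < α') (hX : ∀ t ∈ Finset.range T, |X t| ≤ γ)
    (hX' : ∀ t ∈ Finset.range T, |X' t| ≤ γ)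
    (hz : ∑ t ∈ Finset.range T, psiCatoni (α * (X t - z)) = 0)
    (hz' : ∑ t ∈ Finset.range T, psiCatoni (α' * (X' t - z')) = 0)
    (hsum : ∑ t ∈ Finset.range T, (α * |X t - X' t| + 3 * γ * |α - α'|) ≤ T * ε)
    (hε : 0 ≤ ε) (hε₁ : ε ≤ 1 / 18) (hεA : ε ≤ (α * γ) ^ 2 / 18) :
    |z - z'| ≤ catoniRadius (α * γ) ε / α := by
  have hup := sub_le_catoniRadius_div hT hα hα' hX hX' hz hz' hsum hε hε₁ hεA
  have hdown := sub_le_catoniRadius_div (X := -X) (X' := -X') (z := -z) (z' := -z') hT hα hα'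
    (by simpa using hX) (by simpa using hX')
    (by rw [sum_psiCatoni_neg_sub_neg, hz, neg_zero])
    (by rw [sum_psiCatoni_neg_sub_neg, hz', neg_zero])
    (by simpa only [Pi.neg_apply, neg_sub_neg, abs_sub_comm (X' _)] using hsum) hε hε₁ hεA
  rw [abs_sub_le_iff]
  constructor <;> linarith

/-- perturbation bound for the root of the Catoni objective. -/
theorem stmt17 (T : ℕ) (hT : 0 < T) (X X' : ℕ → ℝ) (γ α α' : ℝ)
    (hα : 0 < α) (hα' : 0 < α')
    (hX : ∀ t ∈ Finset.range T, |X t| ≤ γ)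
    (hX' : ∀ t ∈ Finset.range T, |X' t| ≤ γ)
    (z z' : ℝ)
    (hz : ∑ t ∈ Finset.range T, psiCatoni (α * (X t - z)) = 0)
    (hz' : ∑ t ∈ Finset.range T, psiCatoni (α' * (X' t - z')) = 0)
    (eps : ℝ)
    (heps : eps = (1 / T) * (∑ t ∈ Finset.range T, α * |X t - X' t|) + 3 * γ * |α - α'|)
    (hsmall : eps ≤ (1 / 18) * min 1 (α ^ 2 * γ ^ 2)) :
    |z - z'| ≤ ((1 + 2 * α * γ) / α) * eps + Real.sqrt (2 * eps / α ^ 2) := by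
  have hγ : 0 ≤ γ := (abs_nonneg _).trans (hX 0 (Finset.mem_range.mpr hT))
  have hsum : ∑ t ∈ Finset.range T, (α * |X t - X' t| + 3 * γ * |α - α'|) = T * eps := by
    rw [Finset.sum_add_distrib, Finset.sum_const, Finset.card_range, nsmul_eq_mul, heps]
    field_simp
  have hε : 0 ≤ eps := by
    rw [heps]
    have := Finset.sum_nonneg fun t (_ : t ∈ Finset.range T) =>
      mul_nonneg hα.le (abs_nonneg (X t - X' t))
    positivity
  have hε₁ : eps ≤ 1 / 18 := by linarith [min_le_left 1 (α ^ 2 * γ ^ 2)]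
  have hεA : eps ≤ (α * γ) ^ 2 / 18 := by linarith [min_le_right 1 (α ^ 2 * γ ^ 2), mul_pow α γ 2]
  calc |z - z'| ≤ catoniRadius (α * γ) eps / α :=
        abs_sub_le_catoniRadius_div hT hα hα' hX hX' hz hz' hsum.le hε hε₁ hεA
    _ = ((1 + 2 * α * γ) / α) * eps + Real.sqrt (2 * eps / α ^ 2) := by
        rw [Real.sqrt_div' _ (by positivity), Real.sqrt_sq hα.le, catoniRadius]
        ring
end

section
/- Let (F_t) be a filtration and X_1,...,X_T real random variables with X_t F_t-measurable, E[X_t | F_{t-1}] = 0, |X_t| <= b almost surely, and sum_{t=1}^T E[X_t^2 | F_{t-1}] <= V almost surely for fixed constants b, V > 0. Then for any delta in (0,1), with probability at least 1 - delta, sum_{t=1}^T X_t <= 2*sqrt(V*log(1/delta)) + b*log(1/delta). -/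
/-!
For `0 ≤ λ ≤ 1 / b` the process `M_n = exp (λ S_n - λ² W_n)`, with `S_n = ∑_{t ≤ n} X_t` and
`W_n = ∑_{t ≤ n} E[X_t² | 𝔉_{t-1}]`, is a supermartingale: since `|λ X_{n+1}| ≤ 1`,
`exp (λ X_{n+1}) ≤ 1 + λ X_{n+1} + λ² X_{n+1}²`, whose conditional mean given `𝔉_n` is
`1 + λ² E[X_{n+1}² | 𝔉_n] ≤ exp (λ² E[X_{n+1}² | 𝔉_n])`. Hence `E[M_T] ≤ 1`, and as `W_T ≤ V`,
Markov's inequality gives `P(S_T > a) ≤ exp (λ² V - λ a)`. For `L = log (1 / δ)` and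
`a = 2 √(V L) + b L`, the rate `λ = min (√(L / V), 1 / b)` makes this at most `e^{-L} = δ`.
-/

open MeasureTheory Finset Real

lemma Real.exp_le_one_add_add_sq {x : ℝ} (hx : |x| ≤ 1) : exp x ≤ 1 + x + x ^ 2 := by
  linarith [(abs_le.mp (abs_exp_sub_one_sub_id_le hx)).2]

section ConditionalMoment

variable {Ω : Type*} {m mΩ : MeasurableSpace Ω} {μ : Measure Ω} {Y : Ω → ℝ} {b l : ℝ}

lemma exp_mul_le_of_abs_le (hl : 0 ≤ l) (hlb : l * b ≤ 1) {y : ℝ} (hy : |y| ≤ b) :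
    exp (l * y) ≤ 1 + l * y + l ^ 2 * y ^ 2 := by
  have hly : |l * y| ≤ 1 := by
    rw [abs_mul, abs_of_nonneg hl]
    nlinarith [abs_nonneg y]
  simpa only [mul_pow] using Real.exp_le_one_add_add_sq hly

lemma integrable_exp_mul [IsFiniteMeasure μ] (hl : 0 ≤ l) (hlb : l * b ≤ 1)
    (hY : Integrable Y μ) (hY2 : Integrable (fun ω => Y ω ^ 2) μ) (hbdd : ∀ᵐ ω ∂μ, |Y ω| ≤ b) :
    Integrable (fun ω => exp (l * Y ω)) μ := by
  refine (((integrable_const 1).add (hY.const_mul l)).add (hY2.const_mul (l ^ 2))).mono'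
    (continuous_exp.comp_aestronglyMeasurable (hY.aestronglyMeasurable.const_mul l)) ?_
  filter_upwards [hbdd] with ω hω
  rw [norm_of_nonneg (exp_pos _).le]
  exact exp_mul_le_of_abs_le hl hlb hω

lemma condExp_exp_mul_le [IsFiniteMeasure μ] (hm : m ≤ mΩ) (hl : 0 ≤ l) (hlb : l * b ≤ 1)
    (hY : Integrable Y μ) (hY2 : Integrable (fun ω => Y ω ^ 2) μ)
    (hbdd : ∀ᵐ ω ∂μ, |Y ω| ≤ b) (hmean : μ[Y | m] =ᵐ[μ] 0) :
    μ[fun ω => exp (l * Y ω) | m] ≤ᵐ[μ] fun ω => 1 + l ^ 2 * μ[fun ω => Y ω ^ 2 | m] ω := by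
  set Y2 : Ω → ℝ := fun ω => Y ω ^ 2
  have hQ_int : Integrable ((fun _ => (1 : ℝ)) + l • Y + l ^ 2 • Y2) μ :=
    ((integrable_const 1).add (hY.smul l)).add (hY2.smul (l ^ 2))
  have hlin : μ[(fun _ => (1 : ℝ)) + l • Y + l ^ 2 • Y2 | m]
      =ᵐ[μ] fun ω => 1 + l * μ[Y | m] ω + l ^ 2 * μ[Y2 | m] ω := by
    filter_upwards [condExp_add ((integrable_const 1).add (hY.smul l)) (hY2.smul (l ^ 2)) m,
      condExp_add (integrable_const 1) (hY.smul l) m, condExp_smul l Y m,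
      condExp_smul (l ^ 2) Y2 m] with ω h1 h2 h3 h4
    simp only [h1, Pi.add_apply, h2, h3, h4, condExp_const hm, Pi.smul_apply, smul_eq_mul]
  filter_upwards [condExp_mono (m := m) (integrable_exp_mul hl hlb hY hY2 hbdd) hQ_int
      (hbdd.mono fun ω hω => exp_mul_le_of_abs_le hl hlb hω), hlin, hmean] with ω h1 h2 h3
  rw [h2, h3] at h1
  simpa using h1

end ConditionalMoment

section FreedmanProcess

variable {Ω : Type*} {mΩ : MeasurableSpace Ω} (μ : Measure Ω) (𝔉 : Filtration ℕ mΩ)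
  (X : ℕ → Ω → ℝ)

noncomputable def predictableQuadVar (n : ℕ) (ω : Ω) : ℝ :=
  ∑ t ∈ Icc 1 n, μ[fun ω' => X t ω' ^ 2 | 𝔉 (t - 1)] ω

noncomputable def freedmanProcess (l : ℝ) (n : ℕ) (ω : Ω) : ℝ :=
  exp (l * ∑ t ∈ Icc 1 n, X t ω - l ^ 2 * predictableQuadVar μ 𝔉 X n ω)

variable {μ 𝔉 X}

lemma predictableQuadVar_succ (n : ℕ) (ω : Ω) :
    predictableQuadVar μ 𝔉 X (n + 1) ω
      = predictableQuadVar μ 𝔉 X n ω + μ[fun ω' => X (n + 1) ω' ^ 2 | 𝔉 n] ω := by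
  simp [predictableQuadVar, sum_Icc_succ_top]

lemma stronglyMeasurable_predictableQuadVar (n : ℕ) :
    StronglyMeasurable[𝔉 (n - 1)] (predictableQuadVar μ 𝔉 X n) := by
  unfold predictableQuadVar
  refine Finset.stronglyMeasurable_fun_sum _ fun t ht => ?_
  exact stronglyMeasurable_condExp.mono (𝔉.mono (by grind))

lemma ae_predictableQuadVar_nonneg (n : ℕ) : ∀ᵐ ω ∂μ, 0 ≤ predictableQuadVar μ 𝔉 X n ω := by
  have hv : ∀ᵐ ω ∂μ, ∀ t, 0 ≤ μ[fun ω' => X t ω' ^ 2 | 𝔉 (t - 1)] ω :=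
    ae_all_iff.mpr fun t => condExp_nonneg (ae_of_all _ fun ω => sq_nonneg _)
  filter_upwards [hv] with ω hω
  exact sum_nonneg fun t _ => hω t

lemma freedmanProcess_zero (l : ℝ) : freedmanProcess μ 𝔉 X l 0 = 1 := by
  ext ω
  simp [freedmanProcess, predictableQuadVar]

lemma freedmanProcess_pos (l : ℝ) (n : ℕ) (ω : Ω) : 0 < freedmanProcess μ 𝔉 X l n ω :=
  exp_pos _

lemma freedmanProcess_succ (l : ℝ) (n : ℕ) (ω : Ω) :
    freedmanProcess μ 𝔉 X l (n + 1) ω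
      = freedmanProcess μ 𝔉 X l n ω * exp (-(l ^ 2 * μ[fun ω' => X (n + 1) ω' ^ 2 | 𝔉 n] ω))
        * exp (l * X (n + 1) ω) := by
  simp only [freedmanProcess, predictableQuadVar_succ, sum_Icc_succ_top (Nat.le_add_left 1 n),
    ← exp_add]
  ring_nf

lemma stronglyAdapted_freedmanProcess (hadapt : ∀ t, StronglyMeasurable[𝔉 t] (X t)) (l : ℝ) :
    StronglyAdapted 𝔉 (freedmanProcess μ 𝔉 X l) := fun n => by
  refine continuous_exp.comp_stronglyMeasurable (.sub (.const_mul ?_ l) (.const_mul ?_ _))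
  · exact Finset.stronglyMeasurable_fun_sum _ fun t ht => (hadapt t).mono (𝔉.mono (mem_Icc.mp ht).2)
  · exact stronglyMeasurable_predictableQuadVar n |>.mono (𝔉.mono (Nat.sub_le n 1))

lemma ae_freedmanProcess_le {b l : ℝ} (hl : 0 ≤ l) (hbdd : ∀ t, ∀ᵐ ω ∂μ, |X t ω| ≤ b) (n : ℕ) :
    ∀ᵐ ω ∂μ, freedmanProcess μ 𝔉 X l n ω ≤ exp (l * (n * b)) := by
  filter_upwards [ae_all_iff.mpr hbdd, ae_predictableQuadVar_nonneg (μ := μ) (𝔉 := 𝔉) (X := X) n]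
    with ω hX hW
  have hS : ∑ t ∈ Icc 1 n, X t ω ≤ n * b := by
    simpa using sum_le_sum fun t (_ : t ∈ Icc 1 n) => (abs_le.mp (hX t)).2
  unfold freedmanProcess
  gcongr
  nlinarith [mul_le_mul_of_nonneg_left hS hl, mul_nonneg (sq_nonneg l) hW]

lemma integrable_freedmanProcess [IsFiniteMeasure μ] (hadapt : ∀ t, StronglyMeasurable[𝔉 t] (X t))
    {b l : ℝ} (hl : 0 ≤ l) (hbdd : ∀ t, ∀ᵐ ω ∂μ, |X t ω| ≤ b) (n : ℕ) :
    Integrable (freedmanProcess μ 𝔉 X l n) μ := by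
  refine (integrable_const (exp (l * (n * b)))).mono'
    ((stronglyAdapted_freedmanProcess hadapt l n).mono (𝔉.le n)).aestronglyMeasurable ?_
  filter_upwards [ae_freedmanProcess_le (𝔉 := 𝔉) hl hbdd n] with ω hω
  rwa [norm_of_nonneg (freedmanProcess_pos l n ω).le]

variable {b l : ℝ}

lemma condExp_freedmanProcess_succ_le [IsFiniteMeasure μ]
    (hadapt : ∀ t, StronglyMeasurable[𝔉 t] (X t)) (hint : ∀ t, Integrable (X t) μ)
    (hint2 : ∀ t, Integrable (fun ω => X t ω ^ 2) μ)
    (hmean : ∀ t, 1 ≤ t → μ[X t | 𝔉 (t - 1)] =ᵐ[μ] 0) (hbdd : ∀ t, ∀ᵐ ω ∂μ, |X t ω| ≤ b)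
    (hl : 0 ≤ l) (hlb : l * b ≤ 1) (n : ℕ) :
    μ[freedmanProcess μ 𝔉 X l (n + 1) | 𝔉 n] ≤ᵐ[μ] freedmanProcess μ 𝔉 X l n := by
  set v := μ[fun ω => X (n + 1) ω ^ 2 | 𝔉 n]
  set G : Ω → ℝ := fun ω => freedmanProcess μ 𝔉 X l n ω * exp (-(l ^ 2 * v ω))
  set Z : Ω → ℝ := fun ω => exp (l * X (n + 1) ω)
  have hG : StronglyMeasurable[𝔉 n] G := (stronglyAdapted_freedmanProcess hadapt l n).mul
    (continuous_exp.comp_stronglyMeasurable (stronglyMeasurable_condExp.const_mul _).neg)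
  have hGZ : freedmanProcess μ 𝔉 X l (n + 1) = G * Z := funext (freedmanProcess_succ l n)
  have hGZ_int : Integrable (G * Z) μ := hGZ ▸ integrable_freedmanProcess hadapt hl hbdd (n + 1)
  have hZ_int : Integrable Z μ := integrable_exp_mul hl hlb (hint _) (hint2 _) (hbdd _)
  have hmean' : μ[X (n + 1) | 𝔉 n] =ᵐ[μ] 0 := by simpa using hmean (n + 1) (by omega)
  rw [hGZ]
  filter_upwards [condExp_mul_of_stronglyMeasurable_left hG hGZ_int hZ_int,
    condExp_exp_mul_le (𝔉.le n) hl hlb (hint _) (hint2 _) (hbdd _) hmean'] with ω hpull hZ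
  have hG_nonneg : 0 ≤ G ω := (mul_pos (freedmanProcess_pos l n ω) (exp_pos _)).le
  calc μ[G * Z | 𝔉 n] ω = G ω * μ[Z | 𝔉 n] ω := hpull
    _ ≤ G ω * (1 + l ^ 2 * v ω) := mul_le_mul_of_nonneg_left hZ hG_nonneg
    _ ≤ G ω * exp (l ^ 2 * v ω) := by gcongr; linarith [add_one_le_exp (l ^ 2 * v ω)]
    _ = freedmanProcess μ 𝔉 X l n ω := by simp only [G, mul_assoc, ← exp_add]; simp

lemma supermartingale_freedmanProcess [IsFiniteMeasure μ]
    (hadapt : ∀ t, StronglyMeasurable[𝔉 t] (X t)) (hint : ∀ t, Integrable (X t) μ)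
    (hint2 : ∀ t, Integrable (fun ω => X t ω ^ 2) μ)
    (hmean : ∀ t, 1 ≤ t → μ[X t | 𝔉 (t - 1)] =ᵐ[μ] 0) (hbdd : ∀ t, ∀ᵐ ω ∂μ, |X t ω| ≤ b)
    (hl : 0 ≤ l) (hlb : l * b ≤ 1) :
    Supermartingale (freedmanProcess μ 𝔉 X l) 𝔉 μ :=
  supermartingale_nat (stronglyAdapted_freedmanProcess hadapt l)
    (integrable_freedmanProcess hadapt hl hbdd)
    (condExp_freedmanProcess_succ_le hadapt hint hint2 hmean hbdd hl hlb)

lemma measure_lt_sum_le_exp [IsProbabilityMeasure μ]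
    (hadapt : ∀ t, StronglyMeasurable[𝔉 t] (X t)) (hint : ∀ t, Integrable (X t) μ)
    (hint2 : ∀ t, Integrable (fun ω => X t ω ^ 2) μ)
    (hmean : ∀ t, 1 ≤ t → μ[X t | 𝔉 (t - 1)] =ᵐ[μ] 0) (hbdd : ∀ t, ∀ᵐ ω ∂μ, |X t ω| ≤ b)
    (hl : 0 ≤ l) (hlb : l * b ≤ 1) {T : ℕ} {V : ℝ}
    (hvar : ∀ᵐ ω ∂μ, predictableQuadVar μ 𝔉 X T ω ≤ V) (a : ℝ) :
    μ {ω | a < ∑ t ∈ Icc 1 T, X t ω} ≤ ENNReal.ofReal (exp (l ^ 2 * V - l * a)) := by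
  set c := exp (l * a - l ^ 2 * V)
  have hsub : {ω | a < ∑ t ∈ Icc 1 T, X t ω}
      ≤ᵐ[μ] {ω | c ≤ freedmanProcess μ 𝔉 X l T ω} := by
    filter_upwards [hvar] with ω hW (hS : a < _)
    refine exp_le_exp.mpr ?_
    nlinarith [mul_le_mul_of_nonneg_left hS.le hl, mul_le_mul_of_nonneg_left hW (sq_nonneg l)]
  have hM_le_one : ∫ ω, freedmanProcess μ 𝔉 X l T ω ∂μ ≤ 1 := by
    simpa [freedmanProcess_zero] using
      (supermartingale_freedmanProcess hadapt hint hint2 hmean hbdd hl hlb).setIntegral_le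
        (Nat.zero_le T) MeasurableSet.univ
  have hMarkov := mul_meas_ge_le_integral_of_nonneg
    (ae_of_all _ fun ω => (freedmanProcess_pos l T ω).le)
    (integrable_freedmanProcess hadapt hl hbdd T) c
  calc μ {ω | a < ∑ t ∈ Icc 1 T, X t ω} ≤ μ {ω | c ≤ freedmanProcess μ 𝔉 X l T ω} :=
        measure_mono_ae hsub
    _ = ENNReal.ofReal (μ.real {ω | c ≤ freedmanProcess μ 𝔉 X l T ω}) :=
        (ofReal_measureReal (measure_ne_top _ _)).symm
    _ ≤ ENNReal.ofReal (exp (l ^ 2 * V - l * a)) := by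
        refine ENNReal.ofReal_le_ofReal ?_
        rw [show l ^ 2 * V - l * a = -(l * a - l ^ 2 * V) by ring, exp_neg, ← one_div,
          le_div_iff₀' (exp_pos _)]
        linarith

end FreedmanProcess

lemma exists_freedman_rate {b V L : ℝ} (hb : 0 < b) (hV : 0 ≤ V) (hL : 0 < L) :
    ∃ l, 0 ≤ l ∧ l * b ≤ 1 ∧ l ^ 2 * V - l * (2 * √(V * L) + b * L) ≤ -L := by
  obtain ⟨s, hs, rfl⟩ : ∃ s, 0 ≤ s ∧ s ^ 2 = V := ⟨√V, sqrt_nonneg V, sq_sqrt hV⟩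
  obtain ⟨r, hr, rfl⟩ : ∃ r, 0 < r ∧ r ^ 2 = L := ⟨√L, sqrt_pos.mpr hL, sq_sqrt hL.le⟩
  rw [← mul_pow, sqrt_sq (by positivity)]
  rcases le_or_gt (r * b) s with h | h
  · have hs : 0 < s := lt_of_lt_of_le (by positivity) h
    refine ⟨r / s, by positivity, by rwa [div_mul_eq_mul_div, div_le_one hs], ?_⟩
    field_simp
    nlinarith [mul_pos (mul_pos hr hr) (mul_pos hr hb)]
  · refine ⟨1 / b, by positivity, by field_simp; rfl, ?_⟩
    field_simp
    nlinarith [mul_nonneg hs hb.le]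

lemma ofReal_one_sub_le_of_measure_compl_le {Ω : Type*} {mΩ : MeasurableSpace Ω} {μ : Measure Ω}
    [IsProbabilityMeasure μ] {s : Set Ω} {δ : ℝ} (hδ : 0 ≤ δ) (h : μ sᶜ ≤ ENNReal.ofReal δ) :
    ENNReal.ofReal (1 - δ) ≤ μ s := by
  rw [ENNReal.ofReal_sub _ hδ, ENNReal.ofReal_one, tsub_le_iff_right]
  calc 1 = μ Set.univ := measure_univ.symm
    _ ≤ μ s + μ sᶜ := measure_univ_le_add_compl s
    _ ≤ μ s + ENNReal.ofReal δ := by gcongr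

/-- Freedman's inequality for martingale difference sequences. -/
theorem stmt18 {Ω : Type*} {mΩ : MeasurableSpace Ω} (μ : Measure Ω)
    [IsProbabilityMeasure μ] (𝔉 : Filtration ℕ mΩ) (T : ℕ)
    (X : ℕ → Ω → ℝ) (b V : ℝ) (hb : 0 < b) (hV : 0 < V)
    (hadapt : ∀ t, StronglyMeasurable[𝔉 t] (X t))
    (hint : ∀ t, Integrable (X t) μ)
    (hint2 : ∀ t, Integrable (fun ω => (X t ω) ^ 2) μ)
    (hmean : ∀ t, 1 ≤ t → μ[X t | 𝔉 (t - 1)] =ᵐ[μ] 0)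
    (hbdd : ∀ t, ∀ᵐ ω ∂μ, |X t ω| ≤ b)
    (hvar : ∀ᵐ ω ∂μ,
      ∑ t ∈ Finset.Icc 1 T, (μ[fun ω' => (X t ω') ^ 2 | 𝔉 (t - 1)]) ω ≤ V)
    (δ : ℝ) (hδ : δ ∈ Set.Ioo (0 : ℝ) 1) :
    ENNReal.ofReal (1 - δ) ≤
      μ {ω | ∑ t ∈ Finset.Icc 1 T, X t ω
        ≤ 2 * Real.sqrt (V * Real.log (1 / δ)) + b * Real.log (1 / δ)} := by
  obtain ⟨hδ0, hδ1⟩ := hδ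
  have hL : 0 < Real.log (1 / δ) := log_pos (one_lt_one_div hδ0 hδ1)
  obtain ⟨l, hl, hlb, hrate⟩ := exists_freedman_rate hb hV.le hL
  refine ofReal_one_sub_le_of_measure_compl_le hδ0.le ?_
  simp only [Set.compl_ofPred, not_le]
  refine (measure_lt_sum_le_exp hadapt hint hint2 hmean hbdd hl hlb hvar _).trans ?_
  refine ENNReal.ofReal_le_ofReal ((exp_le_exp.mpr hrate).trans_eq ?_)
  rw [one_div, log_inv, neg_neg, exp_log hδ0]
end

section
/- Consider the class F of functions f: B^d -> R of the form f(phi) = min{ <w, phi> + beta*||phi||_{Lambda^{-1}}, H }, where the parameters satisfy ||w||_2 <= B_w, beta in [0, B], and Lambda >= lambda*I (Loewner order) for fixed B_w, B, H, lambda > 0. For any eps > 0, the eps-covering number of F in the sup-distance dist(f, f') = sup_{phi in B^d} |f(phi) - f'(phi)| satisfies log N(F, dist, eps) <= d*log(1 + 4*B_w/eps) + d^2*log(1 + 8*sqrt(d)*B^2/(lambda*eps^2)). -/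
/-! Every member of the class is `φ ↦ min (⟨w, φ⟩ + √(φᵀ A φ)) H` with `A = β² Λ⁻¹`. On the unit
ball it moves by at most `‖w - w'‖ + √‖A - A'‖` when the parameters move, where `‖·‖` on matrices
is the Frobenius norm, and `Λ ⪰ λ I` forces `‖β² Λ⁻¹‖ ≤ √d B² / λ`. So an `ε/2`-net of the
`w`-ball together with an `ε²/4`-net of the matrices `β² Λ⁻¹` gives an `ε`-net of the class. In an
`n`-dimensional normed space a maximal `δ`-separated subset of a ball of radius `R` is a `δ`-net,
and the disjoint balls of radius `δ/2` around its points fill at most the volume of a ball of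
radius `R + δ/2`, so it has at most `(1 + 2R/δ)ⁿ` points. -/

open Matrix

/-- The class of truncated optimistic linear value functions
f(φ) = min{⟨w, φ⟩ + β‖φ‖_{Λ⁻¹}, H} with ‖w‖₂ ≤ Bw, β ∈ [0, B], Λ ⪰ lam·I. -/
def Fclass (d : ℕ) (Bw B H lam : ℝ) : Set ((Fin d → ℝ) → ℝ) :=
  {f | ∃ (w : Fin d → ℝ) (β : ℝ) (Λ : Matrix (Fin d) (Fin d) ℝ),
    Real.sqrt (w ⬝ᵥ w) ≤ Bw ∧ β ∈ Set.Icc 0 B ∧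
    (Λ - lam • (1 : Matrix (Fin d) (Fin d) ℝ)).PosSemidef ∧
    ∀ φ : Fin d → ℝ, f φ = min (w ⬝ᵥ φ + β * mnorm Λ⁻¹ φ) H}

open Metric MeasureTheory Module WithLp
open scoped NNReal ENNReal

section Packing

variable {E : Type*} [NormedAddCommGroup E] [NormedSpace ℝ E] [FiniteDimensional ℝ E]

theorem Metric.IsSeparated.card_le_of_subset_closedBall {C : Finset E} {ε : ℝ≥0} {R : ℝ}
    (hε : 0 < ε) (hR : 0 ≤ R) (hC : IsSeparated ε (C : Set E))
    (hCR : (C : Set E) ⊆ closedBall 0 R) :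
    (C.card : ℝ) ≤ (1 + 2 * R / ε) ^ finrank ℝ E := by
  let _ : MeasurableSpace E := borel E
  have _ : BorelSpace E := ⟨rfl⟩
  set μ : Measure E := Measure.addHaar
  set ρ : ℝ := ε / 2 with hρ
  have hρ0 : 0 < ρ := by positivity
  have hdisj : (C : Set E).PairwiseDisjoint (ball · ρ) := fun x hx y hy hxy => by
    have hsep : (ε : ℝ≥0∞) < edist x y := hC hx hy hxy
    rw [edist_nndist, ENNReal.coe_lt_coe, ← NNReal.coe_lt_coe, coe_nndist] at hsep
    exact ball_disjoint_ball (by linarith)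
  have hunion : (⋃ x ∈ C, ball x ρ) ⊆ ball 0 (R + ρ) := by
    simp only [Set.iUnion_subset_iff]
    intro x hx y hy
    have := mem_closedBall.mp (hCR hx)
    rw [mem_ball] at hy ⊢
    linarith [dist_triangle y x 0]
  have hvol : (C.card : ℝ≥0∞) * μ (ball 0 ρ) ≤ μ (ball 0 (R + ρ)) := calc
    (C.card : ℝ≥0∞) * μ (ball 0 ρ) = ∑ x ∈ C, μ (ball x ρ) := by
      simp only [Measure.addHaar_ball_center, Finset.sum_const, nsmul_eq_mul]
    _ = μ (⋃ x ∈ C, ball x ρ) :=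
      (measure_biUnion_finset hdisj fun _ _ => measurableSet_ball).symm
    _ ≤ μ (ball 0 (R + ρ)) := measure_mono hunion
  rw [Measure.addHaar_ball_of_pos μ _ hρ0, Measure.addHaar_ball_of_pos μ (r := R + ρ) _
      (by positivity), ← mul_assoc,
    ENNReal.mul_le_mul_iff_left (measure_ball_pos μ _ one_pos).ne' measure_ball_lt_top.ne,
    ← ENNReal.ofReal_natCast, ← ENNReal.ofReal_mul (by positivity),
    ENNReal.ofReal_le_ofReal_iff (by positivity), ← le_div_iff₀ (by positivity),
    ← div_pow] at hvol
  refine hvol.trans_eq ?_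
  rw [hρ]
  field_simp
  ring

theorem Metric.IsSeparated.encard_le_of_subset_closedBall {C : Set E} {ε : ℝ≥0} {R : ℝ}
    (hε : 0 < ε) (hR : 0 ≤ R) (hC : IsSeparated ε C) (hCR : C ⊆ closedBall 0 R) :
    C.encard ≤ ⌊(1 + 2 * R / ε) ^ finrank ℝ E⌋₊ := by
  by_contra! hlt
  obtain ⟨t, htC, ht⟩ := Set.exists_subset_encard_eq (Order.add_one_le_of_lt hlt)
  have htfin : t.Finite := Set.finite_of_encard_eq_coe ht
  have hcard := Metric.IsSeparated.card_le_of_subset_closedBall (C := htfin.toFinset) hε hR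
    (by simpa using hC.subset htC) (by simpa using htC.trans hCR)
  rw [htfin.encard_eq_coe_toFinset_card] at ht
  have htcard : htfin.toFinset.card = ⌊(1 + 2 * R / ε) ^ finrank ℝ E⌋₊ + 1 := by
    exact_mod_cast ht
  rw [htcard] at hcard
  push_cast at hcard
  linarith [Nat.lt_floor_add_one ((1 + 2 * R / ε) ^ finrank ℝ E)]

theorem exists_finite_net_of_subset_closedBall {A : Set E} {δ R : ℝ} (hδ : 0 < δ) (hR : 0 ≤ R)
    (hA : A ⊆ closedBall 0 R) :
    ∃ N ⊆ A, N.Finite ∧ (N.ncard : ℝ) ≤ (1 + 2 * R / δ) ^ finrank ℝ E ∧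
      ∀ x ∈ A, ∃ y ∈ N, dist x y ≤ δ := by
  set ε : ℝ≥0 := δ.toNNReal
  have hε : 0 < ε := Real.toNNReal_pos.mpr hδ
  have hεδ : (ε : ℝ) = δ := Real.coe_toNNReal _ hδ.le
  have hpack : packingNumber ε A ≤ ⌊(1 + 2 * R / δ) ^ finrank ℝ E⌋₊ :=
    iSup₂_le fun C hCA => iSup_le fun hC =>
      hεδ ▸ hC.encard_le_of_subset_closedBall hε hR (hCA.trans hA)
  have htop : packingNumber ε A ≠ ⊤ := ne_top_of_le_ne_top (by simp) hpack
  have hN := (encard_maximalSeparatedSet htop).trans_le hpack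
  have hNfin : (maximalSeparatedSet ε A).Finite := Set.finite_of_encard_le_coe hN
  refine ⟨maximalSeparatedSet ε A, maximalSeparatedSet_subset, hNfin, ?_, fun x hx => ?_⟩
  · rw [← hNfin.cast_ncard_eq, Nat.cast_le] at hN
    exact (Nat.cast_le.mpr hN).trans (Nat.floor_le (by positivity))
  · obtain ⟨y, hy, hxy⟩ := isCover_maximalSeparatedSet htop hx
    replace hxy : edist x y ≤ ε := hxy
    exact ⟨y, hy, by rwa [edist_le_coe, ← NNReal.coe_le_coe, coe_nndist, hεδ] at hxy⟩

end Packing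

theorem Real.abs_sqrt_sub_sqrt_le {x y : ℝ} (hx : 0 ≤ x) (hy : 0 ≤ y) :
    |√x - √y| ≤ √|x - y| := by
  wlog hyx : y ≤ x generalizing x y
  · rw [abs_sub_comm, abs_sub_comm x]
    exact this hy hx (le_of_not_ge hyx)
  rw [abs_of_nonneg (sub_nonneg.mpr (Real.sqrt_le_sqrt hyx)), abs_of_nonneg (sub_nonneg.mpr hyx),
    sub_le_iff_le_add, Real.sqrt_le_iff]
  refine ⟨by positivity, ?_⟩
  nlinarith [Real.sq_sqrt (sub_nonneg.mpr hyx), Real.sq_sqrt hy,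
    mul_nonneg (Real.sqrt_nonneg (x - y)) (Real.sqrt_nonneg y)]

theorem Real.log_natCast_le_of_le_pow_mul_pow {N k m : ℕ} {a b : ℝ} (ha : 1 ≤ a) (hb : 1 ≤ b)
    (hN : (N : ℝ) ≤ a ^ k * b ^ m) : Real.log N ≤ k * Real.log a + m * Real.log b := by
  rcases N.eq_zero_or_pos with rfl | hN0
  · have := Real.log_nonneg ha
    have := Real.log_nonneg hb
    simp only [Nat.cast_zero, Real.log_zero]
    positivity
  · calc Real.log N ≤ Real.log (a ^ k * b ^ m) := Real.log_le_log (by exact_mod_cast hN0) hN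
      _ = k * Real.log a + m * Real.log b := by
        rw [Real.log_mul (by positivity) (by positivity), Real.log_pow, Real.log_pow]

attribute [local instance] Matrix.frobeniusNormedAddCommGroup Matrix.frobeniusNormedSpace

section Euclidean

variable {n : Type*} [Fintype n]

theorem norm_toLp_sq (x : n → ℝ) : ‖toLp 2 x‖ ^ 2 = x ⬝ᵥ x := by
  rw [← real_inner_self_eq_norm_sq, EuclideanSpace.inner_eq_star_dotProduct, star_trivial]

theorem sqrt_dotProduct_self (x : n → ℝ) : √(x ⬝ᵥ x) = ‖toLp 2 x‖ := by
  rw [← norm_toLp_sq, Real.sqrt_sq (norm_nonneg _)]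

theorem abs_dotProduct_le (x y : n → ℝ) : |x ⬝ᵥ y| ≤ ‖toLp 2 x‖ * ‖toLp 2 y‖ := by
  simpa [EuclideanSpace.inner_eq_star_dotProduct, dotProduct_comm]
    using abs_real_inner_le_norm (toLp 2 x) (toLp 2 y)

theorem Matrix.frobenius_norm_mulVec (M : Matrix n n ℝ) (x : n → ℝ) :
    ‖toLp 2 (M *ᵥ x)‖ ≤ ‖M‖ * ‖toLp 2 x‖ := by
  simpa only [← frobenius_norm_replicateCol (ι := Unit), replicateCol_mulVec]
    using frobenius_norm_mul M (replicateCol Unit x)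

theorem Matrix.abs_dotProduct_mulVec_le_frobenius (M : Matrix n n ℝ) (x : n → ℝ) :
    |x ⬝ᵥ M *ᵥ x| ≤ ‖M‖ * ‖toLp 2 x‖ ^ 2 := calc
  |x ⬝ᵥ M *ᵥ x| ≤ ‖toLp 2 x‖ * ‖toLp 2 (M *ᵥ x)‖ := abs_dotProduct_le _ _
  _ ≤ ‖toLp 2 x‖ * (‖M‖ * ‖toLp 2 x‖) := by gcongr; exact M.frobenius_norm_mulVec x
  _ = ‖M‖ * ‖toLp 2 x‖ ^ 2 := by ring

theorem Matrix.frobenius_norm_sq_eq_sum_mulVec_single [DecidableEq n] (M : Matrix n n ℝ) :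
    ‖M‖ ^ 2 = ∑ j, ‖toLp 2 (M *ᵥ Pi.single j 1)‖ ^ 2 := by
  rw [← frobenius_norm_transpose]
  change ‖toLp 2 fun j => toLp 2 (Mᵀ j)‖ ^ 2 = _
  simp only [PiLp.norm_sq_eq_of_L2, mulVec_single_one]
  rfl

variable [DecidableEq n] {Λ : Matrix n n ℝ} {lam : ℝ}

theorem Matrix.mul_norm_le_norm_mulVec (hΛ : (Λ - lam • 1).PosSemidef) (u : n → ℝ) :
    lam * ‖toLp 2 u‖ ≤ ‖toLp 2 (Λ *ᵥ u)‖ := by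
  have hquad : lam * ‖toLp 2 u‖ ^ 2 ≤ u ⬝ᵥ Λ *ᵥ u := by
    rw [norm_toLp_sq]
    simpa [sub_mulVec, smul_mulVec, dotProduct_sub] using hΛ.dotProduct_mulVec_nonneg u
  rcases (norm_nonneg (toLp 2 u)).eq_or_lt with hu | hu
  · rw [← hu, mul_zero]
    exact norm_nonneg _
  · refine le_of_mul_le_mul_right ?_ hu
    calc lam * ‖toLp 2 u‖ * ‖toLp 2 u‖ ≤ u ⬝ᵥ Λ *ᵥ u := by linarith
      _ ≤ ‖toLp 2 (Λ *ᵥ u)‖ * ‖toLp 2 u‖ := by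
        rw [mul_comm]
        exact (le_abs_self _).trans (abs_dotProduct_le _ _)

theorem Matrix.norm_inv_mulVec_le (hlam : 0 < lam) (hΛ : (Λ - lam • 1).PosSemidef) (v : n → ℝ) :
    ‖toLp 2 (Λ⁻¹ *ᵥ v)‖ ≤ ‖toLp 2 v‖ / lam := by
  have hΛpd : Λ.PosDef := add_sub_cancel (lam • 1) Λ ▸ (PosDef.one.smul hlam).add_posSemidef hΛ
  rw [le_div_iff₀' hlam]
  simpa [mulVec_mulVec, mul_nonsing_inv _ ((isUnit_iff_isUnit_det _).mp hΛpd.isUnit)]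
    using mul_norm_le_norm_mulVec hΛ (Λ⁻¹ *ᵥ v)

theorem Matrix.frobenius_norm_inv_le (hlam : 0 < lam) (hΛ : (Λ - lam • 1).PosSemidef) :
    ‖Λ⁻¹‖ ≤ √(Fintype.card n) / lam := by
  have hcol (j : n) : ‖toLp 2 (Λ⁻¹ *ᵥ Pi.single j 1)‖ ^ 2 ≤ (1 / lam) ^ 2 := by
    have hj : ‖toLp 2 (Pi.single j 1 : n → ℝ)‖ = 1 := by
      rw [← sqrt_dotProduct_self]
      simp
    gcongr
    simpa [hj] using norm_inv_mulVec_le hlam hΛ (Pi.single j 1 : n → ℝ)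
  refine (pow_le_pow_iff_left₀ (norm_nonneg _) (by positivity) two_ne_zero).mp ?_
  calc ‖Λ⁻¹‖ ^ 2 = ∑ j, ‖toLp 2 (Λ⁻¹ *ᵥ Pi.single j 1)‖ ^ 2 :=
        Λ⁻¹.frobenius_norm_sq_eq_sum_mulVec_single
    _ ≤ ∑ _j : n, (1 / lam) ^ 2 := Finset.sum_le_sum fun j _ => hcol j
    _ = (√(Fintype.card n) / lam) ^ 2 := by
      simp only [Finset.sum_const, Finset.card_univ, nsmul_eq_mul, div_pow, one_pow,
        Real.sq_sqrt (Nat.cast_nonneg _)]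
      ring

end Euclidean

def bonusMatrices (n : Type*) [Fintype n] [DecidableEq n] (B lam : ℝ) : Set (Matrix n n ℝ) :=
  {A | ∃ β ∈ Set.Icc 0 B, ∃ Λ : Matrix n n ℝ, (Λ - lam • 1).PosSemidef ∧ A = β ^ 2 • Λ⁻¹}

section OptimisticValue

variable {n : Type*} [Fintype n]

noncomputable def optimisticValue (H : ℝ) (w : n → ℝ) (A : Matrix n n ℝ) (φ : n → ℝ) : ℝ :=
  min (w ⬝ᵥ φ + √(φ ⬝ᵥ A *ᵥ φ)) H

theorem sqrt_dotProduct_smul_mulVec {β : ℝ} (hβ : 0 ≤ β) (M : Matrix n n ℝ) (φ : n → ℝ) :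
    √(φ ⬝ᵥ (β ^ 2 • M) *ᵥ φ) = β * √(φ ⬝ᵥ M *ᵥ φ) := by
  rw [smul_mulVec, dotProduct_smul, smul_eq_mul, Real.sqrt_mul (sq_nonneg β), Real.sqrt_sq hβ]

theorem abs_optimisticValue_sub_le (H : ℝ) {w w' : n → ℝ} {A A' : Matrix n n ℝ} {φ : n → ℝ}
    (hA : 0 ≤ φ ⬝ᵥ A *ᵥ φ) (hA' : 0 ≤ φ ⬝ᵥ A' *ᵥ φ) (hφ : ‖toLp 2 φ‖ ≤ 1) :
    |optimisticValue H w A φ - optimisticValue H w' A' φ| ≤ ‖toLp 2 (w - w')‖ + √‖A - A'‖ := by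
  have hlin : |w ⬝ᵥ φ - w' ⬝ᵥ φ| ≤ ‖toLp 2 (w - w')‖ := calc
    |w ⬝ᵥ φ - w' ⬝ᵥ φ| ≤ ‖toLp 2 (w - w')‖ * ‖toLp 2 φ‖ := by
      rw [← sub_dotProduct]
      exact abs_dotProduct_le _ _
    _ ≤ ‖toLp 2 (w - w')‖ := mul_le_of_le_one_right (norm_nonneg _) hφ
  have hquad : |φ ⬝ᵥ A *ᵥ φ - φ ⬝ᵥ A' *ᵥ φ| ≤ ‖A - A'‖ := calc
    |φ ⬝ᵥ A *ᵥ φ - φ ⬝ᵥ A' *ᵥ φ| ≤ ‖A - A'‖ * ‖toLp 2 φ‖ ^ 2 := by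
      rw [← dotProduct_sub, ← sub_mulVec]
      exact (A - A').abs_dotProduct_mulVec_le_frobenius φ
    _ ≤ ‖A - A'‖ := mul_le_of_le_one_right (norm_nonneg _) (pow_le_one₀ (norm_nonneg _) hφ)
  have hbonus : |√(φ ⬝ᵥ A *ᵥ φ) - √(φ ⬝ᵥ A' *ᵥ φ)| ≤ √‖A - A'‖ :=
    (Real.abs_sqrt_sub_sqrt_le hA hA').trans (Real.sqrt_le_sqrt hquad)
  calc |optimisticValue H w A φ - optimisticValue H w' A' φ|
      ≤ |(w ⬝ᵥ φ + √(φ ⬝ᵥ A *ᵥ φ)) - (w' ⬝ᵥ φ + √(φ ⬝ᵥ A' *ᵥ φ))| := by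
        simpa [optimisticValue] using abs_min_sub_min_le_max (w ⬝ᵥ φ + √(φ ⬝ᵥ A *ᵥ φ)) H
          (w' ⬝ᵥ φ + √(φ ⬝ᵥ A' *ᵥ φ)) H
    _ ≤ |w ⬝ᵥ φ - w' ⬝ᵥ φ| + |√(φ ⬝ᵥ A *ᵥ φ) - √(φ ⬝ᵥ A' *ᵥ φ)| := by
        rw [add_sub_add_comm]
        exact abs_add_le _ _
    _ ≤ ‖toLp 2 (w - w')‖ + √‖A - A'‖ := add_le_add hlin hbonus

theorem exists_finite_net_closedBall_euclideanSpace {R ε : ℝ} (hR : 0 ≤ R) (hε : 0 < ε) :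
    ∃ N ⊆ closedBall (0 : EuclideanSpace ℝ n) R, N.Finite ∧
      (N.ncard : ℝ) ≤ (1 + 4 * R / ε) ^ Fintype.card n ∧
      ∀ w ∈ closedBall 0 R, ∃ w' ∈ N, dist w w' ≤ ε / 2 := by
  obtain ⟨N, hN, hNfin, hNcard, hNnet⟩ :=
    exists_finite_net_of_subset_closedBall (A := closedBall (0 : EuclideanSpace ℝ n) R)
      (half_pos hε) hR subset_rfl
  refine ⟨N, hN, hNfin, hNcard.trans_eq ?_, hNnet⟩
  rw [finrank_euclideanSpace]
  congr 2
  field_simp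
  ring

variable [DecidableEq n]

theorem dotProduct_mulVec_nonneg_of_mem_bonusMatrices {B lam : ℝ} (hlam : 0 ≤ lam)
    {A : Matrix n n ℝ} (hA : A ∈ bonusMatrices n B lam) (φ : n → ℝ) : 0 ≤ φ ⬝ᵥ A *ᵥ φ := by
  obtain ⟨β, -, Λ, hΛ, rfl⟩ := hA
  have hΛpsd : Λ.PosSemidef := sub_add_cancel Λ (lam • 1) ▸ hΛ.add (PosSemidef.one.smul hlam)
  simpa using (hΛpsd.inv.smul (sq_nonneg β)).dotProduct_mulVec_nonneg φ

theorem norm_le_of_mem_bonusMatrices {B lam : ℝ} (hlam : 0 < lam) {A : Matrix n n ℝ}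
    (hA : A ∈ bonusMatrices n B lam) : ‖A‖ ≤ √(Fintype.card n) * B ^ 2 / lam := by
  obtain ⟨β, hβ, Λ, hΛ, rfl⟩ := hA
  have hβB : β ^ 2 ≤ B ^ 2 := pow_le_pow_left₀ hβ.1 hβ.2 2
  calc ‖β ^ 2 • Λ⁻¹‖ = β ^ 2 * ‖Λ⁻¹‖ := by rw [norm_smul, Real.norm_of_nonneg (sq_nonneg β)]
    _ ≤ B ^ 2 * (√(Fintype.card n) / lam) := by
      gcongr
      exact frobenius_norm_inv_le hlam hΛ
    _ = √(Fintype.card n) * B ^ 2 / lam := by ring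

theorem exists_finite_net_bonusMatrices (B : ℝ) {lam ε : ℝ} (hlam : 0 < lam) (hε : 0 < ε) :
    ∃ N ⊆ bonusMatrices n B lam, N.Finite ∧
      (N.ncard : ℝ) ≤ (1 + 8 * √(Fintype.card n) * B ^ 2 / (lam * ε ^ 2)) ^ (Fintype.card n ^ 2) ∧
      ∀ A ∈ bonusMatrices n B lam, ∃ A' ∈ N, dist A A' ≤ (ε / 2) ^ 2 := by
  obtain ⟨N, hN, hNfin, hNcard, hNnet⟩ := exists_finite_net_of_subset_closedBall
    (A := bonusMatrices n B lam) (by positivity : 0 < (ε / 2) ^ 2) (by positivity)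
    fun A hA => mem_closedBall_zero_iff.mpr (norm_le_of_mem_bonusMatrices hlam hA)
  refine ⟨N, hN, hNfin, hNcard.trans_eq ?_, hNnet⟩
  rw [Module.finrank_matrix, Module.finrank_self, mul_one, ← sq]
  congr 2
  field_simp
  ring

theorem abs_optimisticValue_sub_le_of_mem_bonusMatrices (H : ℝ) {B lam : ℝ} (hlam : 0 ≤ lam)
    {w w' : EuclideanSpace ℝ n} {A A' : Matrix n n ℝ} (hA : A ∈ bonusMatrices n B lam)
    (hA' : A' ∈ bonusMatrices n B lam) {φ : n → ℝ} (hφ : √(φ ⬝ᵥ φ) ≤ 1) :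
    |optimisticValue H w.ofLp A φ - optimisticValue H w'.ofLp A' φ| ≤ dist w w' + √(dist A A') := by
  rw [dist_eq_norm, dist_eq_norm, ← toLp_ofLp 2 (w - w'), ofLp_sub]
  exact abs_optimisticValue_sub_le H (dotProduct_mulVec_nonneg_of_mem_bonusMatrices hlam hA φ)
    (dotProduct_mulVec_nonneg_of_mem_bonusMatrices hlam hA' φ) (sqrt_dotProduct_self φ ▸ hφ)

theorem Fclass_eq_image (d : ℕ) (Bw B H lam : ℝ) :
    Fclass d Bw B H lam = (fun p : EuclideanSpace ℝ (Fin d) × Matrix (Fin d) (Fin d) ℝ =>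
      optimisticValue H p.1.ofLp p.2) '' (closedBall 0 Bw ×ˢ bonusMatrices (Fin d) B lam) := by
  ext f
  constructor
  · rintro ⟨w, β, Λ, hw, hβ, hΛ, hf⟩
    refine ⟨(toLp 2 w, β ^ 2 • Λ⁻¹), ⟨?_, β, hβ, Λ, hΛ, rfl⟩, funext fun φ => ?_⟩
    · rwa [mem_closedBall_zero_iff, ← sqrt_dotProduct_self]
    · simp only [hf, optimisticValue, sqrt_dotProduct_smul_mulVec hβ.1, mnorm]
  · rintro ⟨⟨w, A⟩, ⟨hw, β, hβ, Λ, hΛ, rfl⟩, rfl⟩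
    refine ⟨w.ofLp, β, Λ, ?_, hβ, hΛ, fun φ => ?_⟩
    · rwa [sqrt_dotProduct_self, toLp_ofLp, ← mem_closedBall_zero_iff]
    · simp only [optimisticValue, sqrt_dotProduct_smul_mulVec hβ.1, mnorm]

end OptimisticValue

theorem stmt19_general (d : ℕ) (Bw B H lam eps : ℝ)
    (hBw : 0 < Bw) (hlam : 0 < lam) (heps : 0 < eps) :
    ∃ N : Set ((Fin d → ℝ) → ℝ), N ⊆ Fclass d Bw B H lam ∧ N.Finite ∧
      Real.log N.ncard
        ≤ d * Real.log (1 + 4 * Bw / eps)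
          + d ^ 2 * Real.log (1 + 8 * Real.sqrt d * B ^ 2 / (lam * eps ^ 2)) ∧
      ∀ f ∈ Fclass d Bw B H lam, ∃ g ∈ N,
        ∀ φ : Fin d → ℝ, Real.sqrt (φ ⬝ᵥ φ) ≤ 1 → |f φ - g φ| ≤ eps := by
  obtain ⟨Nw, hNw, hNwfin, hNwcard, hNwnet⟩ :=
    exists_finite_net_closedBall_euclideanSpace (n := Fin d) hBw.le heps
  obtain ⟨NA, hNA, hNAfin, hNAcard, hNAnet⟩ :=
    exists_finite_net_bonusMatrices (n := Fin d) B hlam heps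
  rw [Fintype.card_fin] at hNwcard hNAcard
  set Φ := fun p : EuclideanSpace ℝ (Fin d) × Matrix (Fin d) (Fin d) ℝ =>
    optimisticValue H p.1.ofLp p.2
  have hfin := hNwfin.prod hNAfin
  rw [Fclass_eq_image]
  refine ⟨Φ '' (Nw ×ˢ NA), Set.image_mono (Set.prod_mono hNw hNA), hfin.image Φ, ?_, ?_⟩
  · have hcard : ((Φ '' (Nw ×ˢ NA)).ncard : ℝ)
        ≤ (1 + 4 * Bw / eps) ^ d * (1 + 8 * √d * B ^ 2 / (lam * eps ^ 2)) ^ (d ^ 2) := calc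
      ((Φ '' (Nw ×ˢ NA)).ncard : ℝ) ≤ (Nw ×ˢ NA).ncard := by exact_mod_cast Set.ncard_image_le hfin
      _ = Nw.ncard * NA.ncard := by rw [Set.ncard_prod, Nat.cast_mul]
      _ ≤ _ := mul_le_mul hNwcard hNAcard (by positivity) (by positivity)
    exact_mod_cast Real.log_natCast_le_of_le_pow_mul_pow (le_add_of_nonneg_right (by positivity))
      (le_add_of_nonneg_right (by positivity)) hcard
  · rintro _ ⟨⟨w, A⟩, ⟨hw, hA⟩, rfl⟩
    obtain ⟨w', hw', hww'⟩ := hNwnet w hw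
    obtain ⟨A', hA', hAA'⟩ := hNAnet A hA
    refine ⟨Φ (w', A'), Set.mem_image_of_mem Φ ⟨hw', hA'⟩, fun φ hφ => ?_⟩
    calc _ ≤ dist w w' + √(dist A A') :=
          abs_optimisticValue_sub_le_of_mem_bonusMatrices H hlam.le hA (hNA hA') hφ
      _ ≤ eps / 2 + √((eps / 2) ^ 2) := by gcongr
      _ = eps := by rw [Real.sqrt_sq (by positivity), add_halves]

/-- covering number bound for the class of truncated optimistic
linear value functions, in the sup-distance over the unit ball. -/
theorem stmt19 (d : ℕ) (Bw B H lam eps : ℝ)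
    (hBw : 0 < Bw) (hB : 0 < B) (hH : 0 < H) (hlam : 0 < lam) (heps : 0 < eps) :
    ∃ N : Set ((Fin d → ℝ) → ℝ), N ⊆ Fclass d Bw B H lam ∧ N.Finite ∧
      Real.log N.ncard
        ≤ d * Real.log (1 + 4 * Bw / eps)
          + d ^ 2 * Real.log (1 + 8 * Real.sqrt d * B ^ 2 / (lam * eps ^ 2)) ∧
      ∀ f ∈ Fclass d Bw B H lam, ∃ g ∈ N,
        ∀ φ : Fin d → ℝ, Real.sqrt (φ ⬝ᵥ φ) ≤ 1 → |f φ - g φ| ≤ eps :=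
  stmt19_general d Bw B H lam eps hBw hlam heps
end
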